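/- arXiv:2005.10609 — 2 statements merged into one kernel-verified Lean document; each statement's English description precedes it below -/
import Mathlib

section
/- Let F and K be number fields that are linearly disjoint over Q with coprime discriminants. Then the discriminant of the compositum KF satisfies Δ_{KF} = Δ_K^{[F:Q]} · Δ_F^{[K:Q]}. -/
/-!
Put `L = KF`. By linear disjointness, `Tr_{L/ℚ}(xy) = Tr_{K/ℚ}(x) Tr_{F/ℚ}(y)` for `x ∈ K`,
`y ∈ F`, so the products of integral bases of `K` and `F` form a `ℚ`-basis of `L` whose trace
matrix is the Kronecker product of theirs; its discriminant is `Δ_K^[F:ℚ] Δ_F^[K:ℚ]`. Any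
`ℚ`-basis of `L` has discriminant `q² Δ_L` for some `q ∈ ℚ`. Coprimality of the discriminants
makes the different ideals of `K` and `F` coprime in `𝓞 L`, which gives the equality of absolute
values `|Δ_L| = |Δ_K|^[F:ℚ] |Δ_F|^[K:ℚ]`; hence `q² = 1`.
-/

open NumberField Module

namespace IntermediateField

variable {F E : Type*} [Field F] [Field E] [Algebra F E]

theorem restrict_sup_restrict_eq_top (A B : IntermediateField F E) :
    A.restrict le_sup_left ⊔ B.restrict le_sup_right = (⊤ : IntermediateField F ↥(A ⊔ B)) := by
  rw [← lift_inj, lift_top, lift_sup, lift_restrict, lift_restrict]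

namespace LinearDisjoint

variable {A B : IntermediateField F E}

theorem restrict_sup [FiniteDimensional F A] [FiniteDimensional F B] (h : A.LinearDisjoint B) :
    (A.restrict (le_sup_left : A ≤ A ⊔ B)).LinearDisjoint
      (B.restrict (le_sup_right : B ≤ A ⊔ B)) := by
  let e₁ := (restrictAlgEquiv (le_sup_left : A ≤ A ⊔ B)).toLinearEquiv
  let e₂ := (restrictAlgEquiv (le_sup_right : B ≤ A ⊔ B)).toLinearEquiv
  have := e₁.finiteDimensional
  have := e₂.finiteDimensional
  refine .of_finrank_sup ?_
  rw [restrict_sup_restrict_eq_top, finrank_top', h.finrank_sup, e₁.finrank_eq, e₂.finrank_eq]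

variable [FiniteDimensional F E]

theorem trace_mul (h₁ : A.LinearDisjoint B) (h₂ : A ⊔ B = ⊤) (a : A) (b : B) :
    Algebra.trace F E (a * b) = Algebra.trace F A a * Algebra.trace F B b := by
  rw [← Algebra.trace_trace (S := A)]
  have hab : (a : E) * b = a • algebraMap B E b := rfl
  rw [hab, LinearMap.map_smul, h₁.trace_algebraMap h₂, smul_eq_mul, mul_comm,
    ← Algebra.smul_def, LinearMap.map_smul, smul_eq_mul, mul_comm]

theorem discr_mul (h₁ : A.LinearDisjoint B) (h₂ : A ⊔ B = ⊤) {ι κ : Type*}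
    [Fintype ι] [Fintype κ] [DecidableEq ι] [DecidableEq κ] (a : ι → A) (b : κ → B) :
    Algebra.discr F (fun p : ι × κ ↦ (a p.1 : E) * b p.2) =
      Algebra.discr F a ^ Fintype.card κ * Algebra.discr F b ^ Fintype.card ι := by
  have htrace : Algebra.traceMatrix F (fun p : ι × κ ↦ (a p.1 : E) * b p.2) =
      Matrix.kroneckerMap (· * ·) (Algebra.traceMatrix F a) (Algebra.traceMatrix F b) := by
    ext ⟨i, j⟩ ⟨k, l⟩
    simp only [Algebra.traceMatrix_apply, Algebra.traceForm_apply, Matrix.kroneckerMap_apply,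
      ← h₁.trace_mul h₂, MulMemClass.coe_mul, mul_mul_mul_comm]
  rw [Algebra.discr_def, htrace, Matrix.det_kronecker, Algebra.discr_def, Algebra.discr_def]

end LinearDisjoint

end IntermediateField

theorem Algebra.discr_eq_det_toMatrix_sq_mul_discr {A B ι : Type*} [CommRing A] [CommRing B]
    [Algebra A B] [Fintype ι] [DecidableEq ι] (b b' : Basis ι A B) :
    Algebra.discr A b = (b'.toMatrix b).det ^ 2 * Algebra.discr A b' := by
  rw [← Algebra.discr_of_matrix_vecMul, Basis.toMatrix_map_vecMul]

theorem eq_of_eq_sq_mul_of_abs_eq {R : Type*} [Field R] [LinearOrder R] [IsStrictOrderedRing R]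
    {a b q : R} (hb : b ≠ 0) (h : a = q ^ 2 * b) (habs : |a| = |b|) : a = b := by
  have hq : q ^ 2 = 1 := by
    rw [h, abs_mul, abs_sq] at habs
    exact (mul_eq_right₀ (abs_ne_zero.mpr hb)).mp habs
  rw [h, hq, one_mul]

namespace NumberField

theorem exists_discr_basis_eq_sq_mul_discr (K : Type*) [Field K] [NumberField K]
    {ι : Type*} [Fintype ι] [DecidableEq ι] (b : Basis ι ℚ K) :
    ∃ q : ℚ, Algebra.discr ℚ b = q ^ 2 * discr K := by
  let b₀ := (integralBasis K).reindex ((integralBasis K).indexEquiv b)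
  refine ⟨(b₀.toMatrix b).det, ?_⟩
  rw [Algebra.discr_eq_det_toMatrix_sq_mul_discr b b₀, coe_discr, Basis.coe_reindex,
    Algebra.discr_reindex]

theorem discr_eq_discr_pow_mul_discr_pow {L : Type*} [Field L] [NumberField L]
    (K₁ K₂ : IntermediateField ℚ L) (h₁ : K₁.LinearDisjoint K₂) (h₂ : K₁ ⊔ K₂ = ⊤)
    (hco : IsCoprime (discr K₁) (discr K₂)) :
    discr L = discr K₁ ^ finrank ℚ K₂ * discr K₂ ^ finrank ℚ K₁ := by
  let b₁ := integralBasis K₁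
  let b₂ := integralBasis K₂
  have hcard : Fintype.card (Free.ChooseBasisIndex ℤ (𝓞 K₁) × Free.ChooseBasisIndex ℤ (𝓞 K₂)) =
      finrank ℚ L := by
    rw [Fintype.card_prod, ← finrank_eq_card_basis b₁, ← finrank_eq_card_basis b₂,
      ← h₁.finrank_sup, h₂, IntermediateField.finrank_top']
  let b := basisOfLinearIndependentOfCardEqFinrank
    (h₁.linearIndependent_mul b₁.linearIndependent b₂.linearIndependent) hcard
  have hb : Algebra.discr ℚ b =
      ((discr K₁ ^ finrank ℚ K₂ * discr K₂ ^ finrank ℚ K₁ : ℤ) : ℚ) := by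
    rw [coe_basisOfLinearIndependentOfCardEqFinrank, h₁.discr_mul h₂]
    push_cast
    rw [coe_discr, coe_discr, finrank_eq_card_basis b₁, finrank_eq_card_basis b₂]
    -- the two sides differ only in the instance `Algebra ℚ K₁` (`K₁.algebra'` on the left)
    rfl
  obtain ⟨q, hq⟩ := exists_discr_basis_eq_sq_mul_discr L b
  have habs : |discr K₁ ^ finrank ℚ K₂ * discr K₂ ^ finrank ℚ K₁| = |discr L| := by
    rw [Int.abs_eq_natAbs, Int.abs_eq_natAbs, Int.natAbs_mul, Int.natAbs_pow, Int.natAbs_pow,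
      natAbs_discr_eq_natAbs_discr_pow_mul_natAbs_discr_pow L K₁ K₂ h₁ h₂
        (isCoprime_differentIdeal_of_isCoprime_discr L hco)]
  refine (Int.cast_injective (α := ℚ) <|
    eq_of_eq_sq_mul_of_abs_eq ?_ (hb ▸ hq) (by exact_mod_cast habs)).symm
  exact_mod_cast discr_ne_zero L

theorem discr_sup_eq_discr_pow_mul_discr_pow {E : Type*} [Field E] [CharZero E]
    (K₁ K₂ : IntermediateField ℚ E) [NumberField K₁] [NumberField K₂] [NumberField ↥(K₁ ⊔ K₂)]
    (h : K₁.LinearDisjoint K₂) (hco : IsCoprime (discr K₁) (discr K₂)) :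
    discr ↥(K₁ ⊔ K₂) = discr K₁ ^ finrank ℚ K₂ * discr K₂ ^ finrank ℚ K₁ := by
  let e₁ := IntermediateField.restrictAlgEquiv (le_sup_left : K₁ ≤ K₁ ⊔ K₂)
  let e₂ := IntermediateField.restrictAlgEquiv (le_sup_right : K₂ ≤ K₁ ⊔ K₂)
  rw [discr_eq_discr_of_algEquiv _ e₁, discr_eq_discr_of_algEquiv _ e₂] at hco ⊢
  rw [e₁.toLinearEquiv.finrank_eq, e₂.toLinearEquiv.finrank_eq]
  exact discr_eq_discr_pow_mul_discr_pow _ _ (IntermediateField.LinearDisjoint.restrict_sup h)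
    (IntermediateField.restrict_sup_restrict_eq_top K₁ K₂) hco

end NumberField

/-- Let `F` and `K` be number fields (realized inside `ℂ`) that are linearly disjoint over
`ℚ` and have coprime discriminants. Then the discriminant of the compositum `KF` satisfies
`Δ_{KF} = Δ_K^{[F:ℚ]} · Δ_F^{[K:ℚ]}`. -/
theorem discr_compositum_of_coprime (K F : IntermediateField ℚ ℂ)
    [NumberField ↥K] [NumberField ↥F] [NumberField ↥(K ⊔ F)]
    (hdisj : Module.finrank ℚ ↥(K ⊔ F) = Module.finrank ℚ K * Module.finrank ℚ F)
    (hco : IsCoprime (NumberField.discr K) (NumberField.discr F)) :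
    NumberField.discr ↥(K ⊔ F) =
      NumberField.discr K ^ (Module.finrank ℚ F) *
        NumberField.discr F ^ (Module.finrank ℚ K) :=
  discr_sup_eq_discr_pow_mul_discr_pow K F (.of_finrank_sup hdisj) hco
end

section
/- For all real x ≥ 7, the logarithmic integral Li(x) = ∫_2^x dt/log t satisfies Li(x) ≥ x/log x. -/
/-!
Since `d/dt (t / log t) = 1 / log t - 1 / log² t ≤ 1 / log t`, the difference
`Li x - x / log x` is nondecreasing, so it suffices to check `Li 7 ≥ 7 / log 7`.
As `1 / log` is convex on `(1, ∞)`, the midpoint rule on `[2, 3], …, [6, 7]` bounds `Li 7` from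
below, and the five midpoint logarithms are compared with `log 7` through integer powers.
-/

open Real Set MeasureTheory intervalIntegral

theorem ConvexOn.mul_midpoint_le_intervalIntegral {f : ℝ → ℝ} {a b : ℝ} (hab : a ≤ b)
    (hf : ConvexOn ℝ (Icc a b) f) (hfi : IntervalIntegrable f volume a b) :
    (b - a) * f ((a + b) / 2) ≤ ∫ x in a..b, f x := by
  have hreflect_int : IntervalIntegrable (fun x => f (a + b - x)) volume a b := by
    simpa using (hfi.comp_sub_left (a + b)).symm
  have hreflect : ∫ x in a..b, f (a + b - x) = ∫ x in a..b, f x := by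
    rw [integral_comp_sub_left, add_sub_cancel_right, add_sub_cancel_left]
  have hpair : ∀ x ∈ Icc a b, f ((a + b) / 2) ≤ (f x + f (a + b - x)) / 2 := by
    intro x hx
    have hmirror : a + b - x ∈ Icc a b := ⟨by linarith [hx.2], by linarith [hx.1]⟩
    have h := hf.2 hx hmirror (by norm_num : (0 : ℝ) ≤ 1 / 2) (by norm_num : (0 : ℝ) ≤ 1 / 2)
      (by norm_num)
    simp only [smul_eq_mul] at h
    rw [← mul_add, one_div_mul_eq_div, add_sub_cancel] at h
    linarith
  calc (b - a) * f ((a + b) / 2) = ∫ _ in a..b, f ((a + b) / 2) := by simp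
    _ ≤ ∫ x in a..b, (f x + f (a + b - x)) / 2 :=
      integral_mono_on hab intervalIntegrable_const ((hfi.add hreflect_int).div_const 2) hpair
    _ = ∫ x in a..b, f x := by
      rw [intervalIntegral.integral_div, integral_add hfi hreflect_int, hreflect]; ring

theorem convexOn_one_div_log : ConvexOn ℝ (Ioi 1) fun t => 1 / log t := by
  have himage : log '' Ioi 1 = Ioi 0 := by rw [image_log_Ioi one_pos, log_one]
  have hinv : ConvexOn ℝ (log '' Ioi 1) fun u : ℝ => 1 / u := by
    simpa [himage, one_div] using convexOn_zpow (𝕜 := ℝ) (-1)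
  have hanti : AntitoneOn (fun u : ℝ => 1 / u) (log '' Ioi 1) := by
    rw [himage]; exact fun u hu v _ huv => one_div_le_one_div_of_le hu huv
  exact hinv.comp_concaveOn (strictConcaveOn_log_Ioi.concaveOn.subset
    (Ioi_subset_Ioi zero_le_one) (convex_Ioi 1)) hanti

theorem continuousOn_one_div_log : ContinuousOn (fun t => 1 / log t) (Ioi 1) :=
  continuousOn_const.div (continuousOn_log.mono fun _ ht => (zero_lt_one.trans ht).ne')
    fun _ ht => (log_pos ht).ne'

theorem intervalIntegrable_one_div_log {a b : ℝ} (ha : 1 < a) (hb : 1 < b) :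
    IntervalIntegrable (fun t => 1 / log t) volume a b :=
  (continuousOn_one_div_log.mono fun _ ht => (lt_min ha hb).trans_le ht.1).intervalIntegrable

theorem div_log_midpoint_le_integral_one_div_log {a b : ℝ} (ha : 1 < a) (hab : a ≤ b) :
    (b - a) / log ((a + b) / 2) ≤ ∫ t in a..b, 1 / log t := by
  simpa only [mul_one_div] using ConvexOn.mul_midpoint_le_intervalIntegral hab
    (convexOn_one_div_log.subset (fun _ ht => ha.trans_le ht.1) (convex_Icc a b))
    (intervalIntegrable_one_div_log ha (ha.trans_le hab))

theorem div_div_log_le_one_div_log_of_pow_le {b c : ℝ} {n d : ℕ} (hc : 1 < c) (hd : 0 < d)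
    (h : c ^ d ≤ b ^ n) : (d / n : ℝ) / log b ≤ 1 / log c := by
  have hlogc := log_pos hc
  have hlog : d * log c ≤ n * log b := by
    simpa only [log_pow] using log_le_log (pow_pos (zero_lt_one.trans hc) d) h
  have hd' : (0 : ℝ) < d := by exact_mod_cast hd
  rw [div_div, div_le_div_iff₀ (by nlinarith) hlogc]
  linarith

theorem seven_div_log_seven_le_sum :
    7 / log 7 ≤ ∑ k ∈ Finset.range 5, 1 / log ((k : ℝ) + 5 / 2) := by
  -- the exponents are chosen so that `19/9 + 3/2 + 9/7 + 9/8 + 1 ≈ 7.02 > 7`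
  have b0 := div_div_log_le_one_div_log_of_pow_le (b := 7) (c := 5 / 2) (n := 9) (d := 19)
    (by norm_num) (by norm_num) (by norm_num)
  have b1 := div_div_log_le_one_div_log_of_pow_le (b := 7) (c := 7 / 2) (n := 2) (d := 3)
    (by norm_num) (by norm_num) (by norm_num)
  have b2 := div_div_log_le_one_div_log_of_pow_le (b := 7) (c := 9 / 2) (n := 7) (d := 9)
    (by norm_num) (by norm_num) (by norm_num)
  have b3 := div_div_log_le_one_div_log_of_pow_le (b := 7) (c := 11 / 2) (n := 8) (d := 9)
    (by norm_num) (by norm_num) (by norm_num)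
  have b4 := div_div_log_le_one_div_log_of_pow_le (b := 7) (c := 13 / 2) (n := 1) (d := 1)
    (by norm_num) (by norm_num) (by norm_num)
  have h7 : 0 < (log 7)⁻¹ := inv_pos.mpr (log_pos (by norm_num))
  norm_num [Finset.sum_range_succ] at b0 b1 b2 b3 b4 ⊢
  simp only [div_eq_mul_inv] at b0 b1 b2 b3 ⊢
  linarith

theorem seven_div_log_seven_le_integral_one_div_log :
    7 / log 7 ≤ ∫ t in (2 : ℝ)..7, 1 / log t := by
  have hnode : ∀ k : ℕ, (1 : ℝ) < k + 2 := fun k => by linarith [k.cast_nonneg (α := ℝ)]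
  have hsplit := sum_integral_adjacent_intervals (a := fun k : ℕ => (k : ℝ) + 2) (n := 5)
    (f := fun t => 1 / log t) (μ := volume)
    fun k _ => intervalIntegrable_one_div_log (hnode k) (hnode (k + 1))
  calc 7 / log 7 ≤ ∑ k ∈ Finset.range 5, 1 / log ((k : ℝ) + 5 / 2) := seven_div_log_seven_le_sum
    _ ≤ ∑ k ∈ Finset.range 5, ∫ t in (k : ℝ) + 2..((k + 1 : ℕ) : ℝ) + 2, 1 / log t := by
      refine Finset.sum_le_sum fun k _ => ?_
      refine Eq.trans_le ?_ (div_log_midpoint_le_integral_one_div_log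
        (b := ((k + 1 : ℕ) : ℝ) + 2) (hnode k) (by push_cast; linarith))
      push_cast; ring_nf
    _ = ∫ t in (2 : ℝ)..7, 1 / log t := by rw [hsplit]; norm_num

theorem hasDerivAt_div_log {t : ℝ} (ht : 1 < t) :
    HasDerivAt (fun x => x / log x) (1 / log t - 1 / log t ^ 2) t := by
  have h0 : t ≠ 0 := (zero_lt_one.trans ht).ne'
  refine ((hasDerivAt_id' t).div (hasDerivAt_log h0) (log_pos ht).ne').congr_deriv ?_
  field_simp

theorem div_log_sub_div_log_le_integral_one_div_log {a b : ℝ} (ha : 1 < a) (hab : a ≤ b) :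
    b / log b - a / log a ≤ ∫ t in a..b, 1 / log t := by
  have hIcc : Icc a b ⊆ Ioi 1 := fun t ht => ha.trans_le ht.1
  refine sub_le_integral_of_hasDeriv_right_of_le hab
    (fun t ht => (hasDerivAt_div_log (hIcc ht)).continuousAt.continuousWithinAt)
    (fun t ht => (hasDerivAt_div_log (hIcc (Ioo_subset_Icc_self ht))).hasDerivWithinAt)
    ((continuousOn_one_div_log.mono hIcc).integrableOn_Icc) fun t _ => ?_
  have : 0 ≤ 1 / log t ^ 2 := by positivity
  linarith

/-- For all real `x ≥ 7`, the logarithmic integral `Li(x) = ∫_2^x dt/log t` satisfies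
`Li(x) ≥ x / log x`. -/
theorem li_ge_x_div_log (x : ℝ) (hx : 7 ≤ x) :
    x / Real.log x ≤ ∫ t in (2 : ℝ)..x, 1 / Real.log t := by
  rw [← integral_add_adjacent_intervals (b := 7)
    (intervalIntegrable_one_div_log one_lt_two (by norm_num))
    (intervalIntegrable_one_div_log (by norm_num) (by linarith))]
  linarith [seven_div_log_seven_le_integral_one_div_log,
    div_log_sub_div_log_le_integral_one_div_log (by norm_num) hx]
end
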